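/- Let h be a harmonic map with target satisfying the Liouville equation, h_z nonvanishing, and φ defined by e^φ = e^{ψ∘h} h_z \overline{h_z}. Then the 'energy-momentum' identity holds: φ_{zz} − (1/2)φ_z² = ((ψ_{uu} − (1/2)ψ_u²) ∘ h) h_z² + (1/2)Φ(h) + S(h), where Φ(h) = e^{ψ∘h} h_z \overline{h_{\bar z}} is the Hopf differential and S(h) = h_{zzz}/h_z − (3/2)(h_{zz}/h_z)² is the Schwarzian derivative of h. -/

import Mathlib

open Complex ComplexConjugate

/-- Wirtinger derivative ∂/∂z. -/
noncomputable def wd (f : ℂ → ℂ) (z : ℂ) : ℂ :=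
  (1/2 : ℂ) * (fderiv ℝ f z 1 - Complex.I * fderiv ℝ f z Complex.I)

/-- Wirtinger derivative ∂/∂z̄. -/
noncomputable def wdb (f : ℂ → ℂ) (z : ℂ) : ℂ :=
  (1/2 : ℂ) * (fderiv ℝ f z 1 + Complex.I * fderiv ℝ f z Complex.I)
lemma clm_decomp (L : ℂ →L[ℝ] ℂ) (v : ℂ) :
    L v = (1/2 : ℂ) * (L 1 - Complex.I * L Complex.I) * v
        + (1/2 : ℂ) * (L 1 + Complex.I * L Complex.I) * conj v := by
  have hv : v = v.re • (1:ℂ) + v.im • Complex.I := by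
    simp only [Complex.real_smul, mul_one]; exact (Complex.re_add_im v).symm
  rw [hv, map_add, map_smul, map_smul]
  simp only [Complex.real_smul, map_add, map_mul, map_smul, Complex.conj_I,
    Complex.conj_ofReal, map_one, smul_eq_mul]
  ring_nf
  rw [Complex.I_sq]
  ring

lemma fderiv_apply_wd (f : ℂ → ℂ) (z v : ℂ) :
    fderiv ℝ f z v = wd f z * v + wdb f z * conj v := clm_decomp _ v

lemma wd_congr {f g : ℂ → ℂ} {z : ℂ} (hfg : f =ᶠ[nhds z] g) : wd f z = wd g z := by
  rw [wd, wd, hfg.fderiv_eq]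

lemma wd_mul {f g : ℂ → ℂ} {z : ℂ} (hf : DifferentiableAt ℝ f z)
    (hg : DifferentiableAt ℝ g z) :
    wd (fun z => f z * g z) z = f z * wd g z + g z * wd f z := by
  simp only [wd, fderiv_fun_mul hf hg, ContinuousLinearMap.add_apply,
    ContinuousLinearMap.smul_apply, smul_eq_mul]
  ring

lemma wd_add {f g : ℂ → ℂ} {z : ℂ} (hf : DifferentiableAt ℝ f z)
    (hg : DifferentiableAt ℝ g z) :
    wd (fun z => f z + g z) z = wd f z + wd g z := by
  simp only [wd, fderiv_fun_add hf hg, ContinuousLinearMap.add_apply]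
  ring

lemma wd_comp {g h : ℂ → ℂ} {z : ℂ} (hg : DifferentiableAt ℝ g (h z))
    (hh : DifferentiableAt ℝ h z) :
    wd (fun z => g (h z)) z
      = wd g (h z) * wd h z + wdb g (h z) * conj (wdb h z) := by
  have hc : fderiv ℝ (fun z => g (h z)) z = (fderiv ℝ g (h z)).comp (fderiv ℝ h z) :=
    fderiv_comp z hg hh
  simp only [wd, wdb, hc, ContinuousLinearMap.comp_apply]
  rw [fderiv_apply_wd g (h z) (fderiv ℝ h z 1), fderiv_apply_wd g (h z) (fderiv ℝ h z Complex.I)]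
  simp only [wd, wdb]
  set a := fderiv ℝ h z 1
  set b := fderiv ℝ h z Complex.I
  simp only [map_mul, map_add, map_sub, map_one, Complex.conj_I, map_ofNat, map_div₀]
  ring

lemma wd_conj {f : ℂ → ℂ} {z : ℂ} (hf : DifferentiableAt ℝ f z) :
    wd (fun z => conj (f z)) z = conj (wdb f z) := by
  have hc : fderiv ℝ (fun z => conj (f z)) z
      = (Complex.conjCLE.toContinuousLinearMap).comp (fderiv ℝ f z) := by
    have h1 := fderiv_comp z
      (Complex.conjCLE.toContinuousLinearMap.differentiableAt (x := f z)) hf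
    rw [ContinuousLinearMap.fderiv] at h1
    simpa [Function.comp_def] using h1
  simp only [wd, wdb, hc, ContinuousLinearMap.comp_apply,
    ContinuousLinearEquiv.coe_coe, Complex.conjCLE_apply]
  simp only [map_mul, map_add, map_sub, map_one, Complex.conj_I, map_ofNat, map_div₀]
  ring

lemma wd_exp {w : ℂ} : wd Complex.exp w = Complex.exp w ∧ wdb Complex.exp w = 0 := by
  have hd : fderiv ℝ Complex.exp w
      = ((1 : ℂ →L[ℂ] ℂ).smulRight (Complex.exp w)).restrictScalars ℝ :=
    ((Complex.hasDerivAt_exp w).hasFDerivAt.restrictScalars ℝ).fderiv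
  constructor <;>
  · simp only [wd, wdb, hd, ContinuousLinearMap.coe_restrictScalars',
      ContinuousLinearMap.smulRight_apply, ContinuousLinearMap.one_apply, smul_eq_mul]
    ring_nf
    rw [Complex.I_sq]
    ring

lemma wd_exp_comp {f : ℂ → ℂ} {z : ℂ} (hf : DifferentiableAt ℝ f z) :
    wd (fun z => Complex.exp (f z)) z = Complex.exp (f z) * wd f z := by
  rw [wd_comp (DifferentiableAt.restrictScalars ℝ (𝕜' := ℂ)
    Complex.differentiable_exp.differentiableAt) hf, wd_exp.1, wd_exp.2]
  ring

lemma conj_wd_real {ψ : ℂ → ℝ} {w : ℂ} (hψ : DifferentiableAt ℝ ψ w) :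
    conj (wd (fun u => (ψ u : ℂ)) w) = wdb (fun u => (ψ u : ℂ)) w := by
  have hd : fderiv ℝ (fun u => (ψ u : ℂ)) w
      = Complex.ofRealCLM.comp (fderiv ℝ ψ w) := by
    have h1 := fderiv_comp w (Complex.ofRealCLM.differentiableAt (x := ψ w)) hψ
    rw [ContinuousLinearMap.fderiv] at h1
    simpa [Function.comp_def] using h1
  simp only [wd, wdb, hd, ContinuousLinearMap.comp_apply, Complex.ofRealCLM_apply,
    map_mul, map_add, map_sub, map_one, Complex.conj_I, map_ofNat, map_div₀,
    Complex.conj_ofReal]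
  ring

lemma contDiff_wd {f : ℂ → ℂ} (hf : ContDiff ℝ (⊤ : ℕ∞) f) : ContDiff ℝ (⊤ : ℕ∞) (wd f) := by
  have h1 : ContDiff ℝ (⊤ : ℕ∞) (fun z => fderiv ℝ f z) := hf.fderiv_right (le_refl _)
  exact (contDiff_const.mul ((h1.clm_apply contDiff_const).sub
    (contDiff_const.mul (h1.clm_apply contDiff_const))))


/-- the energy-momentum identity
`φ_{zz} − (1/2)φ_z² = ((ψ_{uu} − (1/2)ψ_u²)∘h) h_z² + (1/2)Φ(h) + S(h)`,
where `Φ(h) = e^{ψ∘h} h_z \bar h_z` and `S(h)` is the Schwarzian derivative of `h`. -/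
theorem energy_momentum_identity
    (U V : Set ℂ) (hU : IsOpen U) (hV : IsOpen V) (h φ : ℂ → ℂ) (ψ : ℂ → ℝ)
    (hmaps : Set.MapsTo h U V)
    (hh : ContDiff ℝ (⊤ : ℕ∞) h) (hψ : ContDiff ℝ (⊤ : ℕ∞) ψ) (hφ : ContDiff ℝ (⊤ : ℕ∞) φ)
    (hzne : ∀ z ∈ U, wd h z ≠ 0)
    (harm : ∀ z ∈ U,
      wdb (wd h) z + wd (fun u => (ψ u : ℂ)) (h z) * wd h z * wdb h z = 0)
    (liouville : ∀ u ∈ V,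
      wdb (wd (fun u => (ψ u : ℂ))) u = (1/2) * Complex.exp (ψ u))
    (hexp : ∀ z ∈ U,
      Complex.exp (φ z) = Complex.exp (ψ (h z)) * wd h z * conj (wd h z)) :
    ∀ z ∈ U,
      wd (wd φ) z - (1/2) * (wd φ z)^2
        = (wd (wd (fun u => (ψ u : ℂ))) (h z)
            - (1/2) * (wd (fun u => (ψ u : ℂ)) (h z))^2) * (wd h z)^2
          + (1/2) * (Complex.exp (ψ (h z)) * wd h z * conj (wdb h z))
          + (wd (wd (wd h)) z / wd h z - (3/2) * (wd (wd h) z / wd h z)^2) := by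
  have hψc : ContDiff ℝ (⊤ : ℕ∞) (fun u => (ψ u : ℂ)) := Complex.ofRealCLM.contDiff.comp hψ
  have dh : ∀ w, DifferentiableAt ℝ h w := fun w => (hh.differentiable (by simp)).differentiableAt
  have dφ : ∀ w, DifferentiableAt ℝ φ w := fun w => (hφ.differentiable (by simp)).differentiableAt
  have dψr : ∀ w, DifferentiableAt ℝ ψ w := fun w => (hψ.differentiable (by simp)).differentiableAt
  have dψ : ∀ w, DifferentiableAt ℝ (fun u => (ψ u : ℂ)) w :=
    fun w => (hψc.differentiable (by simp)).differentiableAt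
  have da : ∀ w, DifferentiableAt ℝ (wd h) w :=
    fun w => ((contDiff_wd hh).differentiable (by simp)).differentiableAt
  have daa : ∀ w, DifferentiableAt ℝ (wd (wd h)) w :=
    fun w => ((contDiff_wd (contDiff_wd hh)).differentiable (by simp)).differentiableAt
  have dp : ∀ w, DifferentiableAt ℝ (wd φ) w :=
    fun w => ((contDiff_wd hφ).differentiable (by simp)).differentiableAt
  have dA : ∀ w, DifferentiableAt ℝ (fun w => wd (fun u => (ψ u : ℂ)) (h w)) w :=
    fun w => (((contDiff_wd hψc).comp hh).differentiable (by simp)).differentiableAt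
  have dE : ∀ w, DifferentiableAt ℝ (fun w => ((ψ (h w) : ℂ))) w :=
    fun w => ((hψc.comp hh).differentiable (by simp)).differentiableAt
  have dexpE : ∀ w, DifferentiableAt ℝ (fun w => Complex.exp ((ψ (h w) : ℂ))) w :=
    fun w => (DifferentiableAt.restrictScalars ℝ (𝕜' := ℂ)
      Complex.differentiable_exp.differentiableAt).comp w (dE w)
  have dca : ∀ w, DifferentiableAt ℝ (fun w => conj (wd h w)) w := fun w =>
    (Complex.conjCLE.toContinuousLinearMap.differentiableAt).comp w (da w)
  -- Step A : first-order identity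
  have hI : ∀ z ∈ U, wd h z * wd φ z
      = wd (fun u => (ψ u : ℂ)) (h z) * (wd h z * wd h z) + wd (wd h) z := by
    intro z hz
    have hev : (fun w => Complex.exp (φ w)) =ᶠ[nhds z]
        (fun w => Complex.exp ((ψ (h w) : ℂ)) * wd h w * conj (wd h w)) :=
      Filter.eventuallyEq_of_mem (hU.mem_nhds hz) (fun w hw => hexp w hw)
    have e1 := wd_congr hev
    have hL : wd (fun w => Complex.exp (φ w)) z = Complex.exp (φ z) * wd φ z :=
      wd_exp_comp (dφ z)
    have hR1 : wd (fun w => Complex.exp ((ψ (h w) : ℂ)) * wd h w * conj (wd h w)) z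
        = (Complex.exp ((ψ (h z) : ℂ)) * wd h z) * wd (fun w => conj (wd h w)) z
          + conj (wd h z) * wd (fun w => Complex.exp ((ψ (h w) : ℂ)) * wd h w) z :=
      wd_mul ((dexpE z).mul (da z)) (dca z)
    have hR2 : wd (fun w => Complex.exp ((ψ (h w) : ℂ)) * wd h w) z
        = Complex.exp ((ψ (h z) : ℂ)) * wd (wd h) z
          + wd h z * wd (fun w => Complex.exp ((ψ (h w) : ℂ))) z :=
      wd_mul (dexpE z) (da z)
    have hR3 : wd (fun w => Complex.exp ((ψ (h w) : ℂ))) z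
        = Complex.exp ((ψ (h z) : ℂ)) * wd (fun w => ((ψ (h w) : ℂ))) z :=
      wd_exp_comp (dE z)
    have hR4 : wd (fun w => ((ψ (h w) : ℂ))) z
        = wd (fun u => (ψ u : ℂ)) (h z) * wd h z
          + wdb (fun u => (ψ u : ℂ)) (h z) * conj (wdb h z) :=
      wd_comp (dψ (h z)) (dh z)
    have hR5 : wd (fun w => conj (wd h w)) z = conj (wdb (wd h) z) := wd_conj (da z)
    have hcb : conj (wdb (wd h) z)
        = -(wdb (fun u => (ψ u : ℂ)) (h z) * conj (wd h z) * conj (wdb h z)) := by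
      have hb : wdb (wd h) z
          = -(wd (fun u => (ψ u : ℂ)) (h z) * wd h z * wdb h z) :=
        eq_neg_of_add_eq_zero_left (harm z hz)
      rw [hb, map_neg, map_mul, map_mul, conj_wd_real (dψr (h z))]
    rw [hL, hR1, hR2, hR3, hR4, hR5, hcb] at e1
    have hca : conj (wd h z) ≠ 0 := by
      exact star_ne_zero.mpr (hzne z hz)
    refine mul_left_cancel₀
      (mul_ne_zero (Complex.exp_ne_zero ((ψ (h z) : ℂ))) hca) ?_
    linear_combination e1 - wd φ z * (hexp z hz)
  -- Step B : differentiate the identity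
  intro z hz
  have hev2 : (fun w => wd h w * wd φ w) =ᶠ[nhds z]
      (fun w => wd (fun u => (ψ u : ℂ)) (h w) * (wd h w * wd h w) + wd (wd h) w) :=
    Filter.eventuallyEq_of_mem (hU.mem_nhds hz) (fun w hw => hI w hw)
  have e2 := wd_congr hev2
  have hP : wd (fun w => wd h w * wd φ w) z
      = wd h z * wd (wd φ) z + wd φ z * wd (wd h) z := wd_mul (da z) (dp z)
  have hQ : wd (fun w => wd (fun u => (ψ u : ℂ)) (h w) * (wd h w * wd h w)
        + wd (wd h) w) z
      = wd (fun w => wd (fun u => (ψ u : ℂ)) (h w) * (wd h w * wd h w)) z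
        + wd (wd (wd h)) z :=
    wd_add ((dA z).mul ((da z).mul (da z))) (daa z)
  have hQ1 : wd (fun w => wd (fun u => (ψ u : ℂ)) (h w) * (wd h w * wd h w)) z
      = wd (fun u => (ψ u : ℂ)) (h z) * wd (fun w => wd h w * wd h w) z
        + (wd h z * wd h z) * wd (fun w => wd (fun u => (ψ u : ℂ)) (h w)) z :=
    wd_mul (dA z) ((da z).mul (da z))
  have hQ2 : wd (fun w => wd h w * wd h w) z
      = wd h z * wd (wd h) z + wd h z * wd (wd h) z := wd_mul (da z) (da z)
  have hQ3 : wd (fun w => wd (fun u => (ψ u : ℂ)) (h w)) z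
      = wd (wd (fun u => (ψ u : ℂ))) (h z) * wd h z
        + wdb (wd (fun u => (ψ u : ℂ))) (h z) * conj (wdb h z) :=
    wd_comp (((contDiff_wd hψc).differentiable (by simp)).differentiableAt) (dh z)
  rw [hP, hQ, hQ1, hQ2, hQ3, liouville (h z) (hmaps hz)] at e2
  have ha := hzne z hz
  have E1 := hI z hz
  have hi : wd h z * (wd h z)⁻¹ = 1 := mul_inv_cancel₀ ha
  have hp : wd φ z = wd (fun u => (ψ u : ℂ)) (h z) * wd h z
      + wd (wd h) z * (wd h z)⁻¹ := by
    linear_combination (wd h z)⁻¹ * E1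
      - (wd φ z - wd (fun u => (ψ u : ℂ)) (h z) * wd h z) * hi
  have hq : wd (wd φ) z
      = wd (wd (fun u => (ψ u : ℂ))) (h z) * (wd h z)^2
        + (1/2) * Complex.exp (ψ (h z)) * wd h z * conj (wdb h z)
        + 2 * wd (fun u => (ψ u : ℂ)) (h z) * wd (wd h) z
        + wd (wd (wd h)) z * (wd h z)⁻¹
        - (wd (fun u => (ψ u : ℂ)) (h z) * wd h z + wd (wd h) z * (wd h z)⁻¹)
            * (wd (wd h) z * (wd h z)⁻¹) := by
    linear_combination (wd h z)⁻¹ * e2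
      - (wd (wd φ) z - wd (wd (fun u => (ψ u : ℂ))) (h z) * (wd h z)^2
          - (1/2) * Complex.exp (ψ (h z)) * wd h z * conj (wdb h z)
          - 2 * wd (fun u => (ψ u : ℂ)) (h z) * wd (wd h) z) * hi
      - wd (wd h) z * (wd h z)⁻¹ * hp
  rw [div_eq_mul_inv, div_eq_mul_inv]
  linear_combination hq
    - (1/2) * (wd φ z + wd (fun u => (ψ u : ℂ)) (h z) * wd h z
        + wd (wd h) z * (wd h z)⁻¹) * hp
    - 2 * wd (fun u => (ψ u : ℂ)) (h z) * wd (wd h) z * hi
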